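/- arXiv:1911.01686 — 2 statements merged into one kernel-verified Lean document; each statement's English description precedes it below -/
import Mathlib

section
/- Let σ < 0, 0 < δt < Δt ≤ ΔT, α > 0 and L ≥ 1. Then there exists a real number μ* < 0 such that every complex root μ of the polynomial P either lies in the open disc D_σ or equals μ*. In particular, P has at most one root outside D_σ, and any such root is a negative real number. -/
open Finset in

/-- `β_τ = (1 - σ τ)^(-ΔT/τ)` (real exponent). -/
noncomputable def betaF (σ ΔT τ : ℝ) : ℝ := (1 - σ * τ) ^ (-(ΔT / τ))

/-- `γ_τ = (β_τ² - 1)/(σ (2 - σ τ))`. -/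
noncomputable def gammaF (σ ΔT τ : ℝ) : ℝ := ((betaF σ ΔT τ) ^ 2 - 1) / (σ * (2 - σ * τ))

/-- The polynomial `P(μ) = α μ^{2L-1} + (μγ - δγ) ∑_{ℓ=0}^{L-1} μ^{2(L-ℓ-1)} (μβ - δβ)^{2ℓ}`. -/
noncomputable def Ppoly (β δβ γ δγ α : ℝ) (L : ℕ) (μ : ℂ) : ℂ :=
  (α : ℂ) * μ ^ (2 * L - 1) +
    (μ * (γ : ℂ) - (δγ : ℂ)) *
      ∑ ℓ ∈ Finset.range L, μ ^ (2 * (L - ℓ - 1)) * (μ * (β : ℂ) - (δβ : ℂ)) ^ (2 * ℓ)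

/-- The open disc `D_σ` with center `μ₀ = -β δβ/(1-β²)` and radius `δβ/(1-β²)`. -/
noncomputable def Dsigma (β δβ : ℝ) : Set ℂ :=
  {μ : ℂ | ‖μ - ((-(β * δβ) / (1 - β ^ 2) : ℝ) : ℂ)‖ < δβ / (1 - β ^ 2)}

open Finset

/-! The substitution `s = β - δβ/μ` maps the complement of `D_σ` into the closed unit disc and
turns `P(μ) = 0` into `(d s - c) ∑_{ℓ<L} s^(2ℓ) = α`, where `d = -δγ/δβ > 0` and
`c = γ - β δγ/δβ > 0`. A solution with `Im s > 0` would give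
`Im ∑_{ℓ<L} s^(2ℓ+1) = α Im (s / (d s - c)) = -α c Im s / |d s - c|² < 0`, but this imaginary
part is nonnegative on the closed upper half disc; by conjugation `s = t` is real. The real
left-hand side is strictly increasing where it is positive, so `t`, and with it the root
`μ = δβ/(β - t) < 0`, is the same for every root outside `D_σ`. -/

lemma betaF_pos {σ τ : ℝ} (ΔT : ℝ) (h : σ * τ < 1) : 0 < betaF σ ΔT τ :=
  Real.rpow_pos_of_pos (by linarith) _

lemma betaF_lt_one {σ ΔT τ : ℝ} (hσ : σ < 0) (hτ : 0 < τ) (hT : 0 < ΔT) :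
    betaF σ ΔT τ < 1 :=
  Real.rpow_lt_one_of_one_lt_of_neg (by nlinarith) (neg_neg_of_pos (div_pos hT hτ))

/-- Bernoulli's inequality `1 - σ Δt < (1 - σ δt)^(Δt/δt)`, raised to the power `-ΔT/Δt`. -/
lemma betaF_lt_betaF {σ ΔT δt Δt : ℝ} (hσ : σ < 0) (hδt : 0 < δt) (hδtΔt : δt < Δt)
    (hT : 0 < ΔT) : betaF σ ΔT δt < betaF σ ΔT Δt := by
  have hΔt : 0 < Δt := hδt.trans hδtΔt
  have hbern : 1 - σ * Δt < (1 - σ * δt) ^ (Δt / δt) := by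
    have := one_add_mul_self_lt_rpow_one_add (s := -σ * δt) (by nlinarith)
      (mul_pos (neg_pos.2 hσ) hδt).ne' ((one_lt_div hδt).2 hδtΔt)
    convert this using 1
    · field_simp
      ring
    · ring_nf
  calc betaF σ ΔT δt = ((1 - σ * δt) ^ (Δt / δt)) ^ (-(ΔT / Δt)) := by
        rw [betaF, ← Real.rpow_mul (by nlinarith)]
        field_simp
    _ < betaF σ ΔT Δt :=
        Real.rpow_lt_rpow_of_neg (by nlinarith) hbern (neg_neg_of_pos (div_pos hT hΔt))

lemma gammaF_eq (σ ΔT τ : ℝ) :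
    gammaF σ ΔT τ = (1 - betaF σ ΔT τ ^ 2) / (-σ * (2 - σ * τ)) := by
  rw [gammaF, ← neg_div_neg_eq, neg_sub, neg_mul]

lemma gammaF_pos {σ ΔT τ : ℝ} (hσ : σ < 0) (hτ : 0 < τ) (hT : 0 < ΔT) :
    0 < gammaF σ ΔT τ := by
  have h0 := betaF_pos ΔT (by nlinarith : σ * τ < 1)
  have h1 := betaF_lt_one hσ hτ hT
  rw [gammaF_eq]
  exact div_pos (by nlinarith) (mul_pos (neg_pos.2 hσ) (by nlinarith))

lemma gammaF_lt_gammaF {σ ΔT δt Δt : ℝ} (hσ : σ < 0) (hδt : 0 < δt) (hδtΔt : δt < Δt)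
    (hT : 0 < ΔT) : gammaF σ ΔT Δt < gammaF σ ΔT δt := by
  have hΔt : 0 < Δt := hδt.trans hδtΔt
  have hβ := betaF_lt_betaF hσ hδt hδtΔt hT
  have hδ0 := betaF_pos ΔT (by nlinarith : σ * δt < 1)
  have hΔ1 := betaF_lt_one hσ hΔt hT
  rw [gammaF_eq, gammaF_eq]
  have hσ2 : 0 < σ * σ := mul_pos_of_neg_of_neg hσ hσ
  exact div_lt_div₀ (by nlinarith) (by nlinarith) (by nlinarith)
    (mul_pos (neg_pos.2 hσ) (by nlinarith))

lemma sum_range_mul_nonneg_of_antitone {R : Type*} [CommRing R] [PartialOrder R]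
    [IsOrderedRing R] {w a : ℕ → R} (hw : Antitone w) (hw0 : ∀ i, 0 ≤ w i)
    (ha : ∀ k, 0 ≤ ∑ i ∈ range k, a i) (n : ℕ) : 0 ≤ ∑ i ∈ range n, w i * a i := by
  have hparts := sum_range_by_parts w a n
  simp only [smul_eq_mul] at hparts
  rw [hparts, sub_nonneg]
  refine le_trans (sum_nonpos fun i _ => ?_) (mul_nonneg (hw0 _) (ha n))
  exact mul_nonpos_of_nonpos_of_nonneg (sub_nonpos.2 (hw i.le_succ)) (ha _)

/-- On the unit circle `∑_{i<k} u^(2i+1) (u - conj u) = u^(2k) - 1` telescopes. -/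
lemma im_sum_odd_pow_nonneg_of_norm_eq_one {u : ℂ} (hu : ‖u‖ = 1) (him : 0 < u.im) (k : ℕ) :
    0 ≤ (∑ i ∈ range k, u ^ (2 * i + 1)).im := by
  have htel : (∑ i ∈ range k, u ^ (2 * i + 1)) * (u - starRingEnd ℂ u) = u ^ (2 * k) - 1 := by
    have hconj : u * starRingEnd ℂ u = 1 := by
      rw [Complex.mul_conj, Complex.normSq_eq_norm_sq, hu]; norm_num
    rw [sum_mul, ← pow_zero u, ← mul_zero 2]
    rw [← sum_range_sub (fun i => u ^ (2 * i))]
    refine sum_congr rfl fun i _ => ?_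
    linear_combination -(u ^ (2 * i)) * hconj
  have hre := congrArg Complex.re htel
  rw [Complex.sub_conj, Complex.mul_re] at hre
  simp only [Complex.mul_re, Complex.mul_im, Complex.ofReal_re, Complex.ofReal_im,
    Complex.I_re, Complex.I_im, Complex.sub_re, Complex.one_re] at hre
  have hpow : (u ^ (2 * k)).re ≤ 1 :=
    (Complex.re_le_norm _).trans (by rw [norm_pow, hu, one_pow])
  nlinarith

/-- Writing `s = r u` with `‖u‖ = 1`, this is Abel summation against the weights `r^(2i+1)`. -/
lemma im_sum_odd_pow_nonneg {s : ℂ} (hs : ‖s‖ ≤ 1) (him : 0 < s.im) (n : ℕ) :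
    0 ≤ (∑ i ∈ range n, s ^ (2 * i + 1)).im := by
  set r := ‖s‖
  have hr : 0 < r := norm_pos_iff.2 fun h => by simp [h] at him
  set u := s / r
  have hsu : s = r * u := (mul_div_cancel₀ s (Complex.ofReal_ne_zero.2 hr.ne')).symm
  have hu : ‖u‖ = 1 := by
    rw [norm_div, Complex.norm_real, Real.norm_of_nonneg hr.le, div_self hr.ne']
  have huim : 0 < u.im := by simpa [u] using div_pos him hr
  have hterm : ∀ i, (s ^ (2 * i + 1)).im = r ^ (2 * i + 1) * (u ^ (2 * i + 1)).im := fun i => by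
    rw [hsu, mul_pow, ← Complex.ofReal_pow, Complex.im_ofReal_mul]
  rw [Complex.im_sum]
  simp_rw [hterm]
  refine sum_range_mul_nonneg_of_antitone (fun i j hij => ?_) (fun i => by positivity)
    (fun k => by simpa [Complex.im_sum] using im_sum_odd_pow_nonneg_of_norm_eq_one hu huim k) n
  exact pow_le_pow_of_le_one hr.le hs (by omega)

lemma im_nonpos_of_mul_sum_range_even_pow_eq {c d α : ℝ} (hc : 0 < c) (hα : 0 < α) {s : ℂ}
    (hs : ‖s‖ ≤ 1) {L : ℕ} (heq : (d * s - c) * ∑ ℓ ∈ range L, s ^ (2 * ℓ) = α) : s.im ≤ 0 := by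
  by_contra! him
  set v : ℂ := d * s - c
  have hv : v ≠ 0 := by
    rintro h
    rw [h, zero_mul] at heq
    exact hα.ne' (by exact_mod_cast heq.symm)
  have hodd : ∑ ℓ ∈ range L, s ^ (2 * ℓ + 1) = α * (s / v) := by
    rw [← heq, mul_sum, sum_mul]
    refine sum_congr rfl fun ℓ _ => ?_
    field_simp
    ring
  have hv_im : (s / v).im = -(c * s.im) / Complex.normSq v := by
    simp only [v, Complex.div_im, Complex.sub_re, Complex.sub_im, Complex.mul_re, Complex.mul_im,
      Complex.ofReal_re, Complex.ofReal_im, zero_mul, sub_zero, add_zero]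
    ring
  have hneg : (α * (s / v)).im < 0 := by
    rw [Complex.im_ofReal_mul, hv_im]
    exact mul_neg_of_pos_of_neg hα
      (div_neg_of_neg_of_pos (by nlinarith) (Complex.normSq_pos.2 hv))
  exact hneg.not_ge (hodd ▸ im_sum_odd_pow_nonneg hs him L)

lemma im_eq_zero_of_mul_sum_range_even_pow_eq {c d α : ℝ} (hc : 0 < c) (hα : 0 < α) {s : ℂ}
    (hs : ‖s‖ ≤ 1) {L : ℕ} (heq : (d * s - c) * ∑ ℓ ∈ range L, s ^ (2 * ℓ) = α) : s.im = 0 := by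
  have hconj : (d * starRingEnd ℂ s - c) * ∑ ℓ ∈ range L, starRingEnd ℂ s ^ (2 * ℓ) = α := by
    simpa [map_sum] using congrArg (starRingEnd ℂ) heq
  have hconj_im := im_nonpos_of_mul_sum_range_even_pow_eq hc hα (by rwa [Complex.norm_conj]) hconj
  rw [Complex.conj_im] at hconj_im
  linarith [im_nonpos_of_mul_sum_range_even_pow_eq hc hα hs heq]

lemma sum_range_even_pow_pos (t : ℝ) {L : ℕ} (hL : L ≠ 0) :
    0 < ∑ ℓ ∈ range L, t ^ (2 * ℓ) := by
  simpa only [pow_mul] using geom_sum_pos (sq_nonneg t) hL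

lemma strictMonoOn_mul_sum_range_even_pow {c d : ℝ} (hd : 0 < d) {L : ℕ} (hL : L ≠ 0) :
    StrictMonoOn (fun t : ℝ => (d * t - c) * ∑ ℓ ∈ range L, t ^ (2 * ℓ))
      {t | 0 ≤ t ∧ c ≤ d * t} := by
  rintro t ⟨ht, hct⟩ t' - htt'
  calc (d * t - c) * ∑ ℓ ∈ range L, t ^ (2 * ℓ)
      ≤ (d * t - c) * ∑ ℓ ∈ range L, t' ^ (2 * ℓ) := by
        gcongr
    _ < (d * t' - c) * ∑ ℓ ∈ range L, t' ^ (2 * ℓ) := by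
        gcongr
        exact sum_range_even_pow_pos t' hL

lemma lt_of_mul_sum_range_even_pow_eq {c d α t : ℝ} (hα : 0 < α) {L : ℕ} (hL : L ≠ 0)
    (h : (d * t - c) * ∑ ℓ ∈ range L, t ^ (2 * ℓ) = α) : c < d * t := by
  have := pos_of_mul_pos_left (h ▸ hα) (sum_range_even_pow_pos t hL).le
  linarith

lemma eq_of_mul_sum_range_even_pow_eq {c d α : ℝ} (hd : 0 < d) (hα : 0 < α) {L : ℕ}
    (hL : L ≠ 0) {t t' : ℝ} (ht : 0 ≤ t) (ht' : 0 ≤ t')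
    (h : (d * t - c) * ∑ ℓ ∈ range L, t ^ (2 * ℓ) = α)
    (h' : (d * t' - c) * ∑ ℓ ∈ range L, t' ^ (2 * ℓ) = α) : t = t' :=
  (strictMonoOn_mul_sum_range_even_pow hd hL).injOn
    ⟨ht, (lt_of_mul_sum_range_even_pow_eq hα hL h).le⟩
    ⟨ht', (lt_of_mul_sum_range_even_pow_eq hα hL h').le⟩
    (h.trans h'.symm)

lemma mem_Dsigma_iff {b e : ℝ} (hb : b ^ 2 < 1) (he : 0 ≤ e) {μ : ℂ} :
    μ ∈ Dsigma b e ↔ ‖μ‖ < ‖μ * b - e‖ := by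
  have hb' : 0 < 1 - b ^ 2 := sub_pos.2 hb
  rw [Dsigma, Set.mem_ofPred_eq, ← sq_lt_sq₀ (norm_nonneg _) (div_nonneg he hb'.le),
    ← sq_lt_sq₀ (norm_nonneg _) (norm_nonneg _), Complex.sq_norm, Complex.sq_norm,
    Complex.sq_norm]
  simp only [Complex.normSq_apply, Complex.sub_re, Complex.sub_im, Complex.mul_re,
    Complex.mul_im, Complex.ofReal_re, Complex.ofReal_im, mul_zero, sub_zero, zero_add]
  set x := μ.re
  set y := μ.im
  have key : (1 - b ^ 2) * ((x - -(b * e) / (1 - b ^ 2)) * (x - -(b * e) / (1 - b ^ 2)) + y * y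
      - (e / (1 - b ^ 2)) ^ 2) = x * x + y * y - ((x * b - e) * (x * b - e) + y * b * (y * b)) := by
    field_simp
    ring
  constructor <;> intro h <;> nlinarith

lemma Ppoly_zero (b e g h α : ℝ) (n : ℕ) : Ppoly b e g h α (n + 1) 0 = -(h * e ^ (2 * n)) := by
  rw [Ppoly, show 2 * (n + 1) - 1 = 2 * n + 1 by omega, sum_range_succ,
    sum_eq_zero fun ℓ hℓ => by rw [zero_pow (by have := mem_range.1 hℓ; omega), zero_mul]]
  simp [Even.neg_pow]

lemma Ppoly_eq_mul (b e g h α : ℝ) (n : ℕ) {μ : ℂ} (hμ : μ ≠ 0) :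
    Ppoly b e g h α (n + 1) μ =
      μ ^ (2 * n + 1) * (α + (g - h / μ) * ∑ ℓ ∈ range (n + 1), (b - e / μ) ^ (2 * ℓ)) := by
  have hsum : ∑ ℓ ∈ range (n + 1), μ ^ (2 * (n + 1 - ℓ - 1)) * (μ * b - e) ^ (2 * ℓ)
      = μ ^ (2 * n) * ∑ ℓ ∈ range (n + 1), (b - e / μ) ^ (2 * ℓ) := by
    rw [mul_sum]
    refine sum_congr rfl fun ℓ hℓ => ?_
    have hℓ : ℓ ≤ n := Nat.lt_succ_iff.1 (mem_range.1 hℓ)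
    rw [show μ * b - e = μ * (b - e / μ) by field_simp, mul_pow, ← mul_assoc, ← pow_add]
    congr 2
    omega
  rw [Ppoly, show 2 * (n + 1) - 1 = 2 * n + 1 by omega, hsum]
  field_simp
  ring

lemma exists_real_of_Ppoly_eq_zero {b e g h α : ℝ} {L : ℕ} (hb0 : 0 < b) (hb1 : b < 1)
    (he : 0 < e) (hg : 0 < g) (hh : h < 0) (hα : 0 < α) (hL : 1 ≤ L) {μ : ℂ}
    (hroot : Ppoly b e g h α L μ = 0) (hout : μ ∉ Dsigma b e) :
    ∃ t : ℝ, b < t ∧ μ = ↑(e / (b - t)) ∧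
      (-h / e * t - (g - h / e * b)) * ∑ ℓ ∈ range L, t ^ (2 * ℓ) = α := by
  obtain ⟨n, rfl⟩ := Nat.exists_eq_add_of_le' hL
  have hμ : μ ≠ 0 := by
    rintro rfl
    rw [Ppoly_zero] at hroot
    simp [hh.ne, he.ne'] at hroot
  have heC : (e : ℂ) ≠ 0 := Complex.ofReal_ne_zero.2 he.ne'
  set s : ℂ := b - e / μ with hs_def
  have hred :
      ((-h / e : ℝ) * s - (g - h / e * b : ℝ)) * ∑ ℓ ∈ range (n + 1), s ^ (2 * ℓ) = α := by
    rw [Ppoly_eq_mul _ _ _ _ _ _ hμ] at hroot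
    have hcoeff : (g : ℂ) - h / μ = (g - h / e * b : ℝ) - (-h / e : ℝ) * s := by
      rw [hs_def]
      push_cast
      field_simp
      ring
    rw [hcoeff] at hroot
    linear_combination -((mul_eq_zero.1 hroot).resolve_left (pow_ne_zero _ hμ))
  have hs : ‖s‖ ≤ 1 := by
    have hμs : μ * b - e = μ * s := by
      rw [hs_def]
      field_simp
    rw [mem_Dsigma_iff (by nlinarith) he.le, not_lt, hμs, norm_mul] at hout
    exact le_of_mul_le_mul_left (by simpa using hout) (norm_pos_iff.2 hμ)
  have hc : 0 < g - h / e * b := by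
    have : h / e * b < 0 := mul_neg_of_neg_of_pos (div_neg_of_neg_of_pos hh he) hb0
    linarith
  obtain ⟨t, hst⟩ : ∃ t : ℝ, s = t :=
    ⟨s.re, Complex.ext rfl (by simpa using im_eq_zero_of_mul_sum_range_even_pow_eq hc hα hs hred)⟩
  have hredR : (-h / e * t - (g - h / e * b)) * ∑ ℓ ∈ range (n + 1), t ^ (2 * ℓ) = α := by
    rw [hst] at hred
    exact_mod_cast hred
  have hbt : b < t := by
    have hct := lt_of_mul_sum_range_even_pow_eq hα n.succ_ne_zero hredR
    by_contra! htb
    have := mul_le_mul_of_nonneg_left htb (div_pos (neg_pos.2 hh) he).le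
    have : -h / e * b = -(h / e * b) := by ring
    linarith
  refine ⟨t, hbt, ?_, hredR⟩
  have hbt' : (b : ℂ) - t ≠ 0 := sub_ne_zero.2 (Complex.ofReal_injective.ne hbt.ne)
  rw [Complex.ofReal_div, Complex.ofReal_sub, eq_div_iff hbt']
  rw [hs_def] at hst
  field_simp at hst
  linear_combination hst

theorem roots_in_disc_or_isolated (σ δt Δt ΔT α : ℝ) (L : ℕ) (hσ : σ < 0)
    (hδt : 0 < δt) (hδtΔt : δt < Δt) (hΔtΔT : Δt ≤ ΔT) (hα : 0 < α) (hL : 1 ≤ L) :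
    ∃ μstar : ℝ, μstar < 0 ∧
      ∀ μ : ℂ,
        Ppoly (betaF σ ΔT Δt) (betaF σ ΔT Δt - betaF σ ΔT δt)
          (gammaF σ ΔT Δt) (gammaF σ ΔT Δt - gammaF σ ΔT δt) α L μ = 0 →
        (μ ∈ Dsigma (betaF σ ΔT Δt) (betaF σ ΔT Δt - betaF σ ΔT δt) ∨ μ = (μstar : ℂ)) := by
  have hΔt : 0 < Δt := hδt.trans hδtΔt
  have hT : 0 < ΔT := hΔt.trans_le hΔtΔT
  set b := betaF σ ΔT Δt
  set e := betaF σ ΔT Δt - betaF σ ΔT δt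
  set g := gammaF σ ΔT Δt
  set h := gammaF σ ΔT Δt - gammaF σ ΔT δt
  have hb : 0 < b := betaF_pos ΔT (by nlinarith)
  have he : 0 < e := sub_pos.2 (betaF_lt_betaF hσ hδt hδtΔt hT)
  have hh : h < 0 := sub_neg.2 (gammaF_lt_gammaF hσ hδt hδtΔt hT)
  have key := @exists_real_of_Ppoly_eq_zero b e g h α L hb (betaF_lt_one hσ hΔt hT) he
    (gammaF_pos hσ hΔt hT) hh hα hL
  by_cases hout : ∃ μ, Ppoly b e g h α L μ = 0 ∧ μ ∉ Dsigma b e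
  · obtain ⟨μ₁, hroot₁, hout₁⟩ := hout
    obtain ⟨t₁, hbt₁, rfl, heq₁⟩ := key hroot₁ hout₁
    refine ⟨e / (b - t₁), div_neg_of_pos_of_neg he (sub_neg.2 hbt₁),
      fun μ hroot => or_iff_not_imp_left.2 fun hout => ?_⟩
    obtain ⟨t, hbt, rfl, heq⟩ := key hroot hout
    rw [eq_of_mul_sum_range_even_pow_eq (div_pos (neg_pos.2 hh) he) hα (by omega) (by linarith)
      (by linarith) heq heq₁]
  · simp only [not_exists, not_and, not_not] at hout
    exact ⟨-1, by norm_num, fun μ hroot => Or.inl (hout μ hroot)⟩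
end

section
/- Let σ < 0, 0 < δt < Δt ≤ ΔT, α > 0, L ≥ 1, and let μ be a nonzero complex number. Set a := β − δβ/μ and b := (−γ + δγ/μ)/α. Suppose the complex sequences (v_ℓ)_{ℓ=0}^{L} and (w_ℓ)_{ℓ=1}^{L} satisfy v_0 = 0, v_ℓ = a·v_{ℓ−1} + b·w_ℓ for 1 ≤ ℓ ≤ L, w_ℓ = a·w_{ℓ+1} for 1 ≤ ℓ ≤ L−1, w_L = v_L, and w_L ≠ 0. Then w_ℓ = a^{L−ℓ}·w_L for 1 ≤ ℓ ≤ L, v_L = (∑_{ℓ=1}^{L} a^{2(L−ℓ)}·b)·w_L, and P(μ) = 0. -/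
/-!
Solving the backward recurrence gives `w ℓ = a ^ (L - ℓ) * w L`; feeding this into the forward
recurrence gives `v L = (∑ ℓ ∈ Icc 1 L, a ^ (2 (L - ℓ)) * b) * w L`, so `v L = w L ≠ 0` forces this
sum to be `1`. Multiplying `1 - ∑_{j < L} a ^ (2 j) * b` by `α μ ^ (2 L - 1)` clears the
denominators of `a` and `b` and gives exactly `P(μ)`.
-/

open Finset

theorem eq_pow_mul_of_eq_mul_succ {M : Type*} [Monoid M] {a : M} {w : ℕ → M} {L : ℕ}
    (hw : ∀ ℓ, 1 ≤ ℓ → ℓ ≤ L - 1 → w ℓ = a * w (ℓ + 1)) :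
    ∀ ℓ, 1 ≤ ℓ → ℓ ≤ L → w ℓ = a ^ (L - ℓ) * w L := by
  suffices h : ∀ d, d ≤ L - 1 → w (L - d) = a ^ d * w L by
    intro ℓ h1 h2
    simpa only [Nat.sub_sub_self h2] using h (L - ℓ) (by omega)
  intro d
  induction d with
  | zero => simp
  | succ d ih =>
    intro hd
    have hstep := hw (L - (d + 1)) (by omega) (by omega)
    rw [show L - (d + 1) + 1 = L - d by omega, ih (by omega)] at hstep
    rw [hstep, pow_succ', mul_assoc]

theorem eq_sum_pow_mul_of_eq_mul_pred_add {R : Type*} [Semiring R] {a : R} {f v : ℕ → R} {L : ℕ}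
    (hv0 : v 0 = 0) (hv : ∀ ℓ, 1 ≤ ℓ → ℓ ≤ L → v ℓ = a * v (ℓ - 1) + f ℓ) :
    ∀ n ≤ L, v n = ∑ ℓ ∈ Icc 1 n, a ^ (n - ℓ) * f ℓ := by
  intro n
  induction n with
  | zero => simp [hv0]
  | succ n ih =>
    intro hn
    rw [hv (n + 1) (by omega) hn, Nat.add_sub_cancel, ih (by omega),
      sum_Icc_succ_top (by omega), Nat.sub_self, pow_zero, one_mul, mul_sum]
    congr 1
    refine sum_congr rfl fun ℓ hℓ => ?_
    rw [show n + 1 - ℓ = n - ℓ + 1 by have := (mem_Icc.mp hℓ).2; omega, pow_succ', mul_assoc]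

theorem sum_Icc_one_sub_eq_sum_range {M : Type*} [AddCommMonoid M] (f : ℕ → M) (L : ℕ) :
    ∑ ℓ ∈ Icc 1 L, f (L - ℓ) = ∑ j ∈ range L, f j := by
  rw [← Ico_add_one_right_eq_Icc, sum_Ico_eq_sum_range, ← sum_range_reflect f]
  exact sum_congr rfl fun j _ => by rw [Nat.sub_sub]

theorem Ppoly_eq_mul_one_sub_sum (β δβ γ δγ α : ℝ) (L : ℕ) {μ : ℂ} (hμ : μ ≠ 0) (hα : α ≠ 0) :
    Ppoly β δβ γ δγ α L μ = α * μ ^ (2 * L - 1) *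
      (1 - ∑ j ∈ range L, ((β : ℂ) - (δβ : ℂ) / μ) ^ (2 * j) * ((-(γ : ℂ) + (δγ : ℂ) / μ) / α)) := by
  have hαC : (α : ℂ) ≠ 0 := by exact_mod_cast hα
  rw [Ppoly, mul_sub, mul_one, mul_sum, mul_sum, sub_eq_add_neg _ (∑ _ ∈ _, _), ← sum_neg_distrib]
  congr 1
  refine sum_congr rfl fun j hj => ?_
  rw [show 2 * L - 1 = 2 * (L - j - 1) + 2 * j + 1 by have := mem_range.mp hj; omega,
    show (β : ℂ) - δβ / μ = (μ * β - δβ) / μ by field_simp, div_pow]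
  field_simp
  ring

theorem recurrence_implies_root_general (σ δt Δt ΔT α : ℝ) (L : ℕ)
    (hα : 0 < α)
    (μ : ℂ) (hμ : μ ≠ 0) (a b : ℂ)
    (ha : a = ((betaF σ ΔT Δt : ℝ) : ℂ) - ((betaF σ ΔT Δt - betaF σ ΔT δt : ℝ) : ℂ) / μ)
    (hb : b = (-((gammaF σ ΔT Δt : ℝ) : ℂ) +
        ((gammaF σ ΔT Δt - gammaF σ ΔT δt : ℝ) : ℂ) / μ) / (α : ℂ))
    (v w : ℕ → ℂ)
    (hv0 : v 0 = 0)
    (hv : ∀ ℓ : ℕ, 1 ≤ ℓ → ℓ ≤ L → v ℓ = a * v (ℓ - 1) + b * w ℓ)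
    (hw : ∀ ℓ : ℕ, 1 ≤ ℓ → ℓ ≤ L - 1 → w ℓ = a * w (ℓ + 1))
    (hwL : w L = v L) (hne : w L ≠ 0) :
    (∀ ℓ : ℕ, 1 ≤ ℓ → ℓ ≤ L → w ℓ = a ^ (L - ℓ) * w L) ∧
    v L = (∑ ℓ ∈ Finset.Icc 1 L, a ^ (2 * (L - ℓ)) * b) * w L ∧
    Ppoly (betaF σ ΔT Δt) (betaF σ ΔT Δt - betaF σ ΔT δt)
      (gammaF σ ΔT Δt) (gammaF σ ΔT Δt - gammaF σ ΔT δt) α L μ = 0 := by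
  have hw_pow := eq_pow_mul_of_eq_mul_succ hw
  have hvL : v L = (∑ ℓ ∈ Icc 1 L, a ^ (2 * (L - ℓ)) * b) * w L := by
    rw [eq_sum_pow_mul_of_eq_mul_pred_add hv0 hv L le_rfl, sum_mul]
    refine sum_congr rfl fun ℓ hℓ => ?_
    rw [hw_pow ℓ (mem_Icc.mp hℓ).1 (mem_Icc.mp hℓ).2]
    ring
  have hsum : ∑ ℓ ∈ Icc 1 L, a ^ (2 * (L - ℓ)) * b = 1 := (mul_eq_right₀ hne).mp (hvL ▸ hwL).symm
  refine ⟨hw_pow, hvL, ?_⟩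
  rw [Ppoly_eq_mul_one_sub_sum _ _ _ _ _ _ hμ hα.ne', ← ha, ← hb,
    ← sum_Icc_one_sub_eq_sum_range (fun j => a ^ (2 * j) * b), hsum, sub_self, mul_zero]

theorem recurrence_implies_root (σ δt Δt ΔT α : ℝ) (L : ℕ) (hσ : σ < 0)
    (hδt : 0 < δt) (hδtΔt : δt < Δt) (hΔtΔT : Δt ≤ ΔT) (hα : 0 < α) (hL : 1 ≤ L)
    (μ : ℂ) (hμ : μ ≠ 0) (a b : ℂ)
    (ha : a = ((betaF σ ΔT Δt : ℝ) : ℂ) - ((betaF σ ΔT Δt - betaF σ ΔT δt : ℝ) : ℂ) / μ)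
    (hb : b = (-((gammaF σ ΔT Δt : ℝ) : ℂ) +
        ((gammaF σ ΔT Δt - gammaF σ ΔT δt : ℝ) : ℂ) / μ) / (α : ℂ))
    (v w : ℕ → ℂ)
    (hv0 : v 0 = 0)
    (hv : ∀ ℓ : ℕ, 1 ≤ ℓ → ℓ ≤ L → v ℓ = a * v (ℓ - 1) + b * w ℓ)
    (hw : ∀ ℓ : ℕ, 1 ≤ ℓ → ℓ ≤ L - 1 → w ℓ = a * w (ℓ + 1))
    (hwL : w L = v L) (hne : w L ≠ 0) :
    (∀ ℓ : ℕ, 1 ≤ ℓ → ℓ ≤ L → w ℓ = a ^ (L - ℓ) * w L) ∧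
    v L = (∑ ℓ ∈ Finset.Icc 1 L, a ^ (2 * (L - ℓ)) * b) * w L ∧
    Ppoly (betaF σ ΔT Δt) (betaF σ ΔT Δt - betaF σ ΔT δt)
      (gammaF σ ΔT Δt) (gammaF σ ΔT Δt - gammaF σ ΔT δt) α L μ = 0 :=
  recurrence_implies_root_general σ δt Δt ΔT α L hα μ hμ a b ha hb v w hv0 hv hw hwL hne
end
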